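/- For all integers p, q ≥ 1, the composition μ_{p+q}∘sh_{p,q} is zero as a map (⊗^p V[1]) ⊗ (⊗^q V[1]) → ⊗^{p+q} V[1], where sh_{p,q} is the Koszul-signed shuffle product and μ_n is the iterated signed antisymmetrization. -/

import Mathlib

noncomputable section
namespace PG

open Finsupp

/-- Free `K`-module on the type `α`. -/
abbrev FM (K : Type) [Field K] (α : Type) : Type := α →₀ K

variable {K : Type} [Field K] {ι : Type}

/-- linear extension of a map defined on the canonical basis -/
def extL {α β : Type} (f : α → FM K β) : FM K α →ₗ[K] FM K β :=
  Finsupp.lift (FM K β) K α f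

/-- the sign `(-1)^n` -/
def zsgn (K : Type) [Field K] (n : ℤ) : K := (-1 : K) ^ n

/-- sum of degrees of the entries of a list -/
def dsum {α : Type} (dg : α → ℤ) (l : List α) : ℤ := (l.map dg).sum

/-- enumerate the positions of a list: (prefix, element, suffix) -/
def focuses {α : Type} : List α → List (List α × α × List α)
  | [] => []
  | a :: l => ([], a, l) :: (focuses l).map (fun t => (a :: t.1, t.2.1, t.2.2))

/-- sum of the values of `f` over a list -/
def fsum {α β : Type} [AddCommMonoid β] (l : List α) (f : α → β) : β := (l.map f).sum

/-- all splittings of a list into two complementary subsequences (I, J),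
together with the Koszul sign of the corresponding unshuffle -/
def splits {α : Type} (K : Type) [Field K] (dg : α → ℤ) :
    List α → List (List α × List α × K)
  | [] => [([], [], 1)]
  | a :: l =>
      ((splits K dg l).map (fun t => (a :: t.1, t.2.1, t.2.2)))
      ++ ((splits K dg l).map
          (fun t => (t.1, a :: t.2.1, zsgn K (dg a * dsum dg t.1) * t.2.2)))

/-- `x₁⋯xₙ ↦ Σ_t ± xₜ ⊗ (x₁⋯ x̂ₜ ⋯xₙ)` : canonical embedding of a symmetric word
into (generator) × (symmetric word), with Koszul signs. -/
def symEmb {α : Type} (K : Type) [Field K] (dg : α → ℤ) : List α → FM K (α × List α)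
  | [] => 0
  | a :: l => Finsupp.single (a, l) 1
      + (symEmb K dg l).sum
          (fun b c => (c * zsgn K (dg b.1 * dg a)) • Finsupp.single (b.1, a :: b.2) 1)

/-- the cofree permutative coproduct on (head) ⊗ (symmetric word):
`Δ(x₀ ⊗ x₁⋯xₙ) = Σ_{I ⊔ J, J≠∅} ε (x₀ ⊗ x_I) ⊗ x_J` (second factor expanded by `symEmb`). -/
def permDelta {α : Type} (K : Type) [Field K] (dg : α → ℤ) (b : α × List α) :
    FM K ((α × List α) × (α × List α)) :=
  fsum (splits K dg b.2) (fun t =>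
    match t.2.1 with
    | [] => 0
    | _ => t.2.2 • Finsupp.mapDomain (fun e => ((b.1, t.1), e)) (symEmb K dg t.2.1))

/-- the graded (Koszul-signed) shuffle product on words -/
def shf (K : Type) [Field K] (ds : ι → ℤ) : List ι → List ι → FM K (List ι)
  | [], v => Finsupp.single v 1
  | u, [] => Finsupp.single u 1
  | a :: u, b :: v =>
      Finsupp.mapDomain (a :: ·) (shf K ds u (b :: v))
      + zsgn K (ds b * dsum ds (a :: u)) • Finsupp.mapDomain (b :: ·) (shf K ds (a :: u) v)
  termination_by u v => u.length + v.length

/-- the iterated signed antisymmetrisation μₙ : μ₁ = id,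
μ_{n+1} = μ_n ⊗ id − (μ_n ⊗ id) ∘ τ_{n+1}⁻¹ (Koszul-signed cyclic action). -/
def mu (K : Type) [Field K] (ds : ι → ℤ) : List ι → FM K (List ι)
  | [] => 0
  | [a] => Finsupp.single [a] 1
  | a :: b :: l =>
      Finsupp.mapDomain (fun w => w ++ [(b :: l).getLast (List.cons_ne_nil _ _)])
        (mu K ds ((a :: b :: l).dropLast))
      - zsgn K (ds a * dsum ds (b :: l)) •
          Finsupp.mapDomain (fun w => w ++ [a]) (mu K ds (b :: l))
  termination_by w => w.length
  decreasing_by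
  · simp
  · simp

/-- prepend a general vector (an element of the free module on `ι`) to words -/
def consV (g : FM K ι) (m : FM K (List ι)) : FM K (List ι) :=
  g.sum fun i c => c • Finsupp.mapDomain (i :: ·) m

/-- the nontrivial deconcatenations of a word -/
def cuts {α : Type} (w : List α) : List (List α × List α) :=
  (List.range (w.length - 1)).map (fun k => (w.take (k + 1), w.drop (k + 1)))

/-- the Koszul crossing exponent of a list of positions (each position `i`
carries the degree `degs i`): sum over inversions of products of degrees. -/
def crossExp (degs : ℕ → ℤ) : List ℕ → ℤ
  | [] => 0
  | a :: l => ((l.filter (fun b => decide (b < a))).map (fun b => degs a * degs b)).sum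
      + crossExp degs l

/-- degree of the letter at position `i` of the word `w` -/
def posDeg (ds : ι → ℤ) (w : List ι) (i : ℕ) : ℤ := (w.map ds).getD i 0

/-- subword of `w` on the set of positions `S` (kept in increasing order) -/
def subw (w : List ι) (S : Finset ℕ) : List ι :=
  (((List.range w.length).zip w).filter (fun p => decide (p.1 ∈ S))).map Prod.snd

/-- the Koszul sign of the unshuffle of `w` rearranging its letters in the
order of positions given by `out` -/
def unshSgn (K : Type) [Field K] (ds : ι → ℤ) (w : List ι) (out : List ℕ) : K :=
  zsgn K (crossExp (posDeg ds w) out)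

/-- submodule spanned by a set of relations -/
def idealOf {α : Type} (S : Set (FM K α)) : Submodule K (FM K α) := Submodule.span K S

/-- the span, in the free module on `α × α`, of the relations of `S` put in either factor -/
def idealPair {α : Type} (S : Set (FM K α)) : Submodule K (FM K (α × α)) :=
  Submodule.span K
    ({x | ∃ c, ∃ p ∈ S, x = Finsupp.mapDomain (fun a => (a, c)) p} ∪
     {x | ∃ c, ∃ p ∈ S, x = Finsupp.mapDomain (fun a => (c, a)) p})

/-- the span, in the free module on `α × α × α`, of the relations of `S` put in any factor -/
def idealTriple {α : Type} (S : Set (FM K α)) : Submodule K (FM K (α × α × α)) :=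
  Submodule.span K
    ({x | ∃ c d, ∃ p ∈ S, x = Finsupp.mapDomain (fun a => (a, c, d)) p} ∪
     ({x | ∃ c d, ∃ p ∈ S, x = Finsupp.mapDomain (fun a => (c, a, d)) p} ∪
      {x | ∃ c d, ∃ p ∈ S, x = Finsupp.mapDomain (fun a => (c, d, a)) p}))

/-- graded-symmetry relations on words: `⋯ab⋯ − (−1)^{deg a · deg b} ⋯ba⋯` -/
def symRelW (K : Type) [Field K] (ds : ι → ℤ) : Set (FM K (List ι)) :=
  {x | ∃ u : List ι, ∃ a b : ι, ∃ v : List ι,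
    x = Finsupp.single (u ++ a :: b :: v) 1
      - zsgn K (ds a * ds b) • Finsupp.single (u ++ b :: a :: v) 1}

/-- shuffle relations: the images of all the shuffle products `sh_{p,q}`, `p,q ≥ 1` -/
def shRel (K : Type) [Field K] (ds : ι → ℤ) : Set (FM K (List ι)) :=
  {x | ∃ u v : List ι, u ≠ [] ∧ v ≠ [] ∧ x = shf K ds u v}

/-- graded-symmetry relations in the `List` (symmetric-word) part of `α × List α` -/
def symRelP {α : Type} (K : Type) [Field K] (dg : α → ℤ) : Set (FM K (α × List α)) :=
  {x | ∃ h : α, ∃ l1 : List α, ∃ u v : α, ∃ l2 : List α,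
    x = Finsupp.single (h, l1 ++ u :: v :: l2) 1
      - zsgn K (dg u * dg v) • Finsupp.single (h, l1 ++ v :: u :: l2) 1}

/-- the graded flip on the free module on `α × α` -/
def tauP {α : Type} (K : Type) [Field K] (dg : α → ℤ) :
    FM K (α × α) →ₗ[K] FM K (α × α) :=
  extL (fun p => zsgn K (dg p.1 * dg p.2) • Finsupp.single (p.2, p.1) 1)

/-- τ₁₂ = τ ⊗ id on triples -/
def tau12 {α : Type} (K : Type) [Field K] (dg : α → ℤ) :
    FM K (α × α × α) →ₗ[K] FM K (α × α × α) :=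
  extL (fun p => zsgn K (dg p.1 * dg p.2.1) • Finsupp.single (p.2.1, p.1, p.2.2) 1)

/-- τ₂₃ = id ⊗ τ on triples -/
def tau23 {α : Type} (K : Type) [Field K] (dg : α → ℤ) :
    FM K (α × α × α) →ₗ[K] FM K (α × α × α) :=
  extL (fun p => zsgn K (dg p.2.1 * dg p.2.2) • Finsupp.single (p.1, p.2.2, p.2.1) 1)

/-- `f ⊗ id` for a map `f` with values in two factors (no Koszul sign) -/
def firstT {α : Type} (f : α → FM K (α × α)) :
    FM K (α × α) →ₗ[K] FM K (α × α × α) :=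
  extL (fun p => Finsupp.mapDomain (fun q => (q.1, q.2, p.2)) (f p.1))

/-- `id ⊗ f` for a map `f` of degree `degf` with values in two factors (Koszul sign) -/
def secondT {α : Type} (dg : α → ℤ) (degf : ℤ) (f : α → FM K (α × α)) :
    FM K (α × α) →ₗ[K] FM K (α × α × α) :=
  extL (fun p => zsgn K (degf * dg p.1) •
    Finsupp.mapDomain (fun q => (p.1, q.1, q.2)) (f p.2))

/-- `f ⊗ id + id ⊗ f` for a coderivation-type map `f` of degree `degf` (Koszul sign) -/
def coderT {α : Type} (dg : α → ℤ) (degf : ℤ) (f : α → FM K α) :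
    FM K (α × α) →ₗ[K] FM K (α × α) :=
  extL (fun p => Finsupp.mapDomain (fun q => (q, p.2)) (f p.1)
      + zsgn K (degf * dg p.1) • Finsupp.mapDomain (fun q => (p.1, q)) (f p.2))

/-- homogeneity of an element of the free module on `α`, w.r.t. a degree on `α` -/
def IsHomog {α : Type} (dg : α → ℤ) (x : FM K α) (n : ℤ) : Prop :=
  ∀ a ∈ x.support, dg a = n


/-! ### coproducts on words -/

/-- the unshuffle coproduct of the cocommutative coassociative cogebra
`S⁺(g[1])` (on word representatives):
`Δ(x₁⋯xₙ) = Σ_{I⊔J=[n], I,J≠∅} ε_x(I,J) x_I ⊗ x_J`. -/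
def sDelta (K : Type) [Field K] (ds : ι → ℤ) (w : List ι) : FM K (List ι × List ι) :=
  ∑ S ∈ (Finset.range w.length).powerset.filter
      (fun S => S ≠ ∅ ∧ S ≠ Finset.range w.length),
    unshSgn K ds w
        (S.sort (· ≤ ·) ++ ((Finset.range w.length \ S).sort (· ≤ ·))) •
      Finsupp.single (subw w S, subw w (Finset.range w.length \ S)) 1

/-- the antisymmetrised deconcatenation cocrochet
`δ(x₁⊗…⊗xₙ) = Σ_j (x₁…x_j) ⊗ (x_{j+1}…xₙ) − ε (x_{j+1}…xₙ) ⊗ (x₁…x_j)`. -/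
def lieDelta (K : Type) [Field K] (ds : ι → ℤ) (w : List ι) :
    FM K (List ι × List ι) :=
  fsum (cuts w) (fun p =>
    Finsupp.single p 1
      - zsgn K (dsum ds p.1 * dsum ds p.2) • Finsupp.single (p.2, p.1) 1)

/-- the cofree Leibniz cogebra coproduct on `T⁺(V[1])`:
`δ(x₁⊗…⊗xₙ) = Σ_k (x₁⊗…⊗x_k) ⊗ μ_{n-k}(x_{k+1}⊗…⊗xₙ)`. -/
def leibDelta (K : Type) [Field K] (ds : ι → ℤ) (w : List ι) :
    FM K (List ι × List ι) :=
  fsum (cuts w) (fun p => Finsupp.mapDomain (fun m => (p.1, m)) (mu K ds p.2))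

/-! ### coderivation-type operators on words -/

/-- `Σ_k ± x₁⊗…⊗q₁(x_k)⊗…⊗xₙ` with Koszul prefix signs `(-1)^{Σ_{i<k} deg xᵢ}` -/
def repl1 (K : Type) [Field K] (ds : ι → ℤ) (q1 : ι → FM K ι) :
    List ι → FM K (List ι)
  | [] => 0
  | a :: l => (q1 a).sum (fun i c => c • Finsupp.single (i :: l) 1)
      + zsgn K (ds a) • Finsupp.mapDomain (a :: ·) (repl1 K ds q1 l)

/-- `Σ_k ± x₁⊗…⊗q₂(x_k,x_{k+1})⊗…⊗xₙ` (collapse of every adjacent pair) with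
Koszul prefix signs -/
def repl2 (K : Type) [Field K] (ds : ι → ℤ) (q2 : ι → ι → FM K ι) :
    List ι → FM K (List ι)
  | [] => 0
  | [_] => 0
  | a :: b :: l => (q2 a b).sum (fun i c => c • Finsupp.single (i :: l) 1)
      + zsgn K (ds a) • Finsupp.mapDomain (a :: ·) (repl2 K ds q2 (b :: l))

/-- collapse the leading pair with `q2h`, and every interior pair with `q2i` -/
def headInt (K : Type) [Field K] (ds : ι → ℤ) (q2h q2i : ι → ι → FM K ι) :
    List ι → FM K (List ι)
  | [] => 0
  | [_] => 0
  | a :: b :: l => (q2h a b).sum (fun i c => c • Finsupp.single (i :: l) 1)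
      + zsgn K (ds a) • Finsupp.mapDomain (a :: ·) (repl2 K ds q2i (b :: l))

/-- `D₂(α,β) = (−1)^{deg α} α∧β` on basis letters -/
def d2of (K : Type) [Field K] (ds : ι → ℤ) (w2 : ι → ι → FM K ι) (a b : ι) : FM K ι :=
  zsgn K (ds a) • w2 a b

/-- `D₂∘μ₂(α,β) = D₂(α,β) − (−1)^{deg α · deg β} D₂(β,α)` on basis letters -/
def d2mu (K : Type) [Field K] (ds : ι → ℤ) (w2 : ι → ι → FM K ι) (a b : ι) : FM K ι :=
  d2of K ds w2 a b - zsgn K (ds a * ds b) • d2of K ds w2 b a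

/-- the codifferential of the Leibniz cogebra `T⁺(𝒢[1])` determined by a product
`∧` (no differential part):
`D(α₁⊗…⊗αₙ) = D₂(α₁,α₂)⊗α₃⊗…⊗αₙ + Σ_k ± α₁⊗…⊗(D₂∘μ₂)(α_k,α_{k+1})⊗…⊗αₙ` -/
def Dpre (K : Type) [Field K] (ds : ι → ℤ) (w2 : ι → ι → FM K ι) :
    List ι → FM K (List ι) :=
  headInt K ds (d2of K ds w2) (d2mu K ds w2)

/-! ### the extended bracket and the extension `R₂` of a pre-Lie product -/

/-- the extension of a degree −1 bracket `b2` to words: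
`[X,Y] = Σ_{shuffles, adjacent pair (x from X, y from Y)} ± …⊗[x,y]⊗…` -/
def brS (K : Type) [Field K] (ds : ι → ℤ) (b2 : ι → ι → FM K ι) :
    List ι → List ι → FM K (List ι)
  | [], _ => 0
  | _, [] => 0
  | a :: u, b :: v =>
      Finsupp.mapDomain (a :: ·) (brS K ds b2 u (b :: v))
      + zsgn K (ds b * dsum ds (a :: u)) •
          Finsupp.mapDomain (b :: ·) (brS K ds b2 (a :: u) v)
      + zsgn K (ds b * dsum ds u) • consV (b2 a b) (shf K ds u v)
  termination_by u v => u.length + v.length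

/-- the bracketed tail terms of `R₂`:
`Σ_k u₁⊗…⊗u_{k-1}⊗[u_k,b]⊗sh(u_{k+1}…, v)` with signs -/
def r2brTail (K : Type) [Field K] (ds : ι → ℤ) (b2 : ι → ι → FM K ι) :
    List ι → ι → List ι → FM K (List ι)
  | [], _, _ => 0
  | x :: u, b, v =>
      zsgn K (ds b * dsum ds u) • consV (b2 x b) (shf K ds u v)
      + Finsupp.mapDomain (x :: ·) (r2brTail K ds b2 u b v)

/-- `[α,β] = α◇β − (−1)^{deg α · deg β} β◇α` on basis letters -/
def brOf (K : Type) [Field K] (ds : ι → ℤ) (dia2 : ι → ι → FM K ι) (a b : ι) : FM K ι :=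
  dia2 a b - zsgn K (ds a * ds b) • dia2 b a

/-- the extension `R₂` of the pre-Lie product `◇` to `T⁺(𝒢[1])`:
`R₂(α₁⊗…⊗αₚ, α_{p+1}⊗…⊗α_{p+q}) = ±(α₁◇α_{p+1})⊗sh(…) + Σ_k ± α₁⊗…⊗[α_k,α_{p+1}]⊗sh(…)` -/
def R2w (K : Type) [Field K] (ds : ι → ℤ) (dia2 : ι → ι → FM K ι) :
    List ι → List ι → FM K (List ι)
  | [], _ => 0
  | _, [] => 0
  | a :: u, b :: v =>
      zsgn K (ds b * dsum ds u) • consV (dia2 a b) (shf K ds u v)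
      + Finsupp.mapDomain (a :: ·) (r2brTail K ds (brOf K ds dia2) u b v)


/-! ### the construction on `H[1] ⊗ S(H[1])`, where `H = T⁺(𝒢[1])` -/

/-- the twice-shifted degree `deg'(X) = deg(X) − 1` of a word `X ∈ H[1]` -/
def dgp (ds : ι → ℤ) (w : List ι) : ℤ := dsum ds w - 1

/-- basis of (word representatives of) `H[1] ⊗ S(H[1])` : a head word and a
list of factor words -/
abbrev BB (ι : Type) : Type := List ι × List (List ι)

/-- the `deg'`-degree of a basis element of `H[1] ⊗ S(H[1])` -/
def degB (ds : ι → ℤ) (b : BB ι) : ℤ := dgp ds b.1 + dsum (dgp ds) b.2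

/-- embed a symmetric product whose first factor is a general element of `H` -/
def symEmbV (K : Type) [Field K] (ds : ι → ℤ) (g : FM K (List ι))
    (L : List (List ι)) : FM K (BB ι) :=
  g.sum fun w c => c • symEmb K (dgp ds) (w :: L)

/-- the coderivation `m` of `H[1] ⊗ S(H[1])` extending the codifferential `D` of `H`:
`m(X₀⊗X₁⋯Xₙ) = D(X₀)⊗X₁⋯Xₙ + (−1)^{x₀'} Σ_j ± X₀⊗D(X_j)·X₁⋯ĵ⋯Xₙ` -/
def mB (K : Type) [Field K] (ds : ι → ℤ) (w2 : ι → ι → FM K ι) (b : BB ι) :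
    FM K (BB ι) :=
  (Dpre K ds w2 b.1).sum (fun w c => c • Finsupp.single (w, b.2) 1)
  + zsgn K (dgp ds b.1) • fsum (focuses b.2) (fun t =>
      zsgn K (dgp ds t.2.1 * dsum (dgp ds) t.1) •
        (Dpre K ds w2 t.2.1).sum
          (fun w c => c • Finsupp.single (b.1, w :: (t.1 ++ t.2.2)) 1))

/-- `R₂'(X,Y) = (−1)^{deg' X} R₂(X,Y)` -/
def R2p (K : Type) [Field K] (ds : ι → ℤ) (dia2 : ι → ι → FM K ι)
    (X Y : List ι) : FM K (List ι) :=
  zsgn K (dgp ds X) • R2w K ds dia2 X Y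

/-- `ℓ₂(X,Y) = R₂'(X,Y) + (−1)^{deg'X · deg'Y} R₂'(Y,X)` -/
def ell2 (K : Type) [Field K] (ds : ι → ℤ) (dia2 : ι → ι → FM K ι)
    (X Y : List ι) : FM K (List ι) :=
  R2p K ds dia2 X Y + zsgn K (dgp ds X * dgp ds Y) • R2p K ds dia2 Y X

/-- the coderivation `R` of `H[1] ⊗ S(H[1])` extending `R₂'`:
`R(X₀⊗X₁⋯Xₙ) = Σ_i ± R₂'(X₀,X_i)⊗X₁⋯î⋯Xₙ + (−1)^{x₀'} Σ_{i<j} ± X₀⊗ℓ₂(X_i,X_j)·X₁⋯îĵ⋯Xₙ` -/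
def RB (K : Type) [Field K] (ds : ι → ℤ) (dia2 : ι → ι → FM K ι) (b : BB ι) :
    FM K (BB ι) :=
  fsum (focuses b.2) (fun t =>
    zsgn K (dgp ds t.2.1 * dsum (dgp ds) t.1) •
      (R2p K ds dia2 b.1 t.2.1).sum
        (fun w c => c • Finsupp.single (w, t.1 ++ t.2.2) 1))
  + zsgn K (dgp ds b.1) • fsum (focuses b.2) (fun t1 =>
      fsum (focuses t1.2.2) (fun t2 =>
        zsgn K (dgp ds t1.2.1 * dsum (dgp ds) t1.1
            + dgp ds t2.2.1 * (dsum (dgp ds) t1.1 + dsum (dgp ds) t2.1)) •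
          (ell2 K ds dia2 t1.2.1 t2.2.1).sum
            (fun w c => c • Finsupp.single (b.1, w :: (t1.1 ++ t2.1 ++ t2.2.2)) 1)))

/-- the Leibniz-type coproduct `κ` on `H[1] ⊗ S(H[1])`:
`κ(X₀⊗X₁⋯Xₙ) = Σ_{U₀⊗V₀=X₀, I⊔J} (−1)^{u₀'} ( ε (U₀⊗X_I) ⊗ μV₀·X_J
+ ε (μV₀⊗X_J) ⊗ U₀·X_I ) + (−1)^{x₀'} X₀⊗κ'(X₁⋯Xₙ)` -/
def kappaB (K : Type) [Field K] (ds : ι → ℤ) (b : BB ι) :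
    FM K (BB ι × BB ι) :=
  fsum (cuts b.1) (fun uv =>
    fsum (splits K (dgp ds) b.2) (fun t =>
      (zsgn K (dgp ds uv.1) * t.2.2 * zsgn K (dgp ds uv.2 * dsum (dgp ds) t.1)) •
        Finsupp.mapDomain (fun e => ((uv.1, t.1), e))
          (symEmbV K ds (mu K ds uv.2) t.2.1)
      + (zsgn K (dgp ds uv.1) * t.2.2 * zsgn K (dgp ds uv.1 * dgp ds uv.2)
            * zsgn K (dgp ds uv.1 * dsum (dgp ds) t.1)) •
          (mu K ds uv.2).sum (fun m c =>
            c • Finsupp.mapDomain (fun e => ((m, t.1), e))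
                  (symEmb K (dgp ds) (uv.1 :: t.2.1)))))
  + zsgn K (dgp ds b.1) • fsum (focuses b.2) (fun tf =>
      fsum (cuts tf.2.1) (fun uv =>
        fsum (splits K (dgp ds) tf.1) (fun tp =>
          fsum (splits K (dgp ds) tf.2.2) (fun tq =>
            (zsgn K (dsum (dgp ds) tf.1) * zsgn K (dgp ds uv.1)
                * tp.2.2 * tq.2.2
                * zsgn K (dsum (dgp ds) tp.2.1 * dsum (dgp ds) tq.1
                    + dgp ds tf.2.1 * (dsum (dgp ds) tp.2.1 + dsum (dgp ds) tq.1))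
                * zsgn K (dsum (dgp ds) tp.2.1 + dsum (dgp ds) tq.1)) •
              (Finsupp.mapDomain (fun e => ((b.1, tp.1 ++ tq.1 ++ [uv.1]), e))
                  (symEmbV K ds (mu K ds uv.2) (tp.2.1 ++ tq.2.1))
               + zsgn K (dgp ds uv.1 * dgp ds uv.2) •
                  (mu K ds uv.2).sum (fun m c =>
                    c • Finsupp.mapDomain (fun e => ((b.1, tp.1 ++ tq.1 ++ [m]), e))
                          (symEmb K (dgp ds) (uv.1 :: (tp.2.1 ++ tq.2.1)))))))))

/-! Write `μ_n = (μ_{n-1} ⊗ id) − (μ_{n-1} ⊗ id) ∘ τ_n⁻¹`. Splitting a shuffle of `u` and `v`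
according to its last letter expresses the first term through `μ` of shuffles in which the
last letter of `u` or of `v` has been removed; splitting it according to its first letter, which
`τ_n⁻¹` moves to the end, expresses the second term through `μ` of shuffles in which the first
letter of `u` or of `v` has been removed. By induction on the total length all four terms
vanish, except when `u` or `v` is a single letter: then the two terms in which that word has
become empty are equal and cancel. -/

section Signs

lemma zsgn_add (m n : ℤ) : zsgn K (m + n) = zsgn K m * zsgn K n :=
  zpow_add₀ (by norm_num) m n

@[simp] lemma zsgn_zero : zsgn K 0 = 1 := zpow_zero _

lemma zsgn_mul_zsgn_add (m n : ℤ) : zsgn K m * zsgn K (m + n) = zsgn K n := by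
  rw [zsgn_add, ← mul_assoc, zsgn, ← mul_zpow]
  norm_num

variable (ds : ι → ℤ)

@[simp] lemma dsum_nil : dsum ds ([] : List ι) = 0 := rfl

@[simp] lemma dsum_cons (a : ι) (l : List ι) : dsum ds (a :: l) = ds a + dsum ds l := by
  simp [dsum]

@[simp] lemma dsum_append (l m : List ι) : dsum ds (l ++ m) = dsum ds l + dsum ds m := by
  simp [dsum]

end Signs

lemma _root_.List.cons_eq_append_singleton_cases {α : Type} {a x : α} {l₁ l₀ : List α}
    (h : a :: l₁ = l₀ ++ [x]) :
    (l₁ = [] ∧ l₀ = [] ∧ a = x) ∨ (l₁ ≠ [] ∧ l₀ ≠ [] ∧ l₀.length = l₁.length) := by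
  have hlen := congrArg List.length h
  rcases l₁ with _ | ⟨c, l₁⟩
  · obtain rfl : l₀ = [] := List.eq_nil_of_length_eq_zero (by simpa using hlen.symm)
    simp_all
  · refine .inr ⟨List.cons_ne_nil _ _, ?_, by simpa using hlen.symm⟩
    rintro rfl
    simp at hlen

section LinearCombination

variable {α β γ : Type}

lemma extL_eq_linearCombination (f : α → FM K β) : extL f = linearCombination K f := by
  ext
  simp [extL, linearCombination_apply]

lemma linearCombination_congr_of_mem_support {f g : α → FM K β} {x : FM K α}
    (h : ∀ a ∈ x.support, f a = g a) : linearCombination K f x = linearCombination K g x := by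
  simp only [linearCombination_apply]
  exact Finsupp.sum_congr fun a ha => by rw [h a ha]

lemma linearCombination_sub_apply (f g : α → FM K β) (x : FM K α) :
    linearCombination K (f - g) x = linearCombination K f x - linearCombination K g x := by
  simp [linearCombination_apply, smul_sub]

lemma linearCombination_const_smul (c : K) (f : α → FM K β) (x : FM K α) :
    linearCombination K (fun a => c • f a) x = c • linearCombination K f x := by
  simp only [linearCombination_apply, Finsupp.smul_sum, smul_comm c]

lemma linearCombination_mapDomain_comp (g : β → γ) (f : α → FM K β) (x : FM K α) :
    linearCombination K (fun a => mapDomain g (f a)) x = mapDomain g (linearCombination K f x) :=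
  (apply_linearCombination K (lmapDomain K K g) f x).symm

end LinearCombination

section Shuffle

variable (ds : ι → ℤ)

lemma shf_nil_left (v : List ι) : shf K ds [] v = single v 1 := by
  rw [shf]

lemma shf_nil_right (u : List ι) : shf K ds u [] = single u 1 := by
  cases u <;> simp [shf]

lemma shf_cons_cons (a b : ι) (u v : List ι) : shf K ds (a :: u) (b :: v) =
    mapDomain (a :: ·) (shf K ds u (b :: v))
      + zsgn K (ds b * dsum ds (a :: u)) • mapDomain (b :: ·) (shf K ds (a :: u) v) := by
  rw [shf]

lemma perm_of_mem_support_shf {u v w : List ι} (hw : w ∈ (shf K ds u v).support) :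
    w.Perm (u ++ v) := by
  classical
  induction u, v using shf.induct generalizing w with
  | case1 v =>
    rw [shf_nil_left] at hw
    simp_all
  | case2 u _ =>
    rw [shf_nil_right] at hw
    simp_all
  | case3 a u b v ih₁ ih₂ =>
    rw [shf_cons_cons] at hw
    rcases Finset.mem_union.1 (support_add hw) with hw | hw
    · obtain ⟨w', hw', rfl⟩ := Finset.mem_image.1 (mapDomain_support hw)
      exact (ih₁ hw').cons a
    · obtain ⟨w', hw', rfl⟩ := Finset.mem_image.1 (mapDomain_support (support_smul hw))
      exact ((ih₂ hw').cons b).trans List.perm_middle.symm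

lemma dsum_of_mem_support_shf {u v w : List ι} (hw : w ∈ (shf K ds u v).support) :
    dsum ds w = dsum ds (u ++ v) :=
  ((perm_of_mem_support_shf ds hw).map ds).sum_eq

lemma length_of_mem_support_shf {u v w : List ι} (hw : w ∈ (shf K ds u v).support) :
    w.length = u.length + v.length := by
  simpa using (perm_of_mem_support_shf ds hw).length_eq

lemma shf_append_singleton (x y : ι) (u v : List ι) :
    shf K ds (u ++ [x]) (v ++ [y]) =
      zsgn K (ds x * dsum ds (v ++ [y])) • mapDomain (· ++ [x]) (shf K ds u (v ++ [y]))
        + mapDomain (· ++ [y]) (shf K ds (u ++ [x]) v) := by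
  induction u generalizing v with
  | nil =>
    induction v with
    | nil => simp [shf_cons_cons, shf_nil_left, shf_nil_right, mul_comm, add_comm]
    | cons b v ih =>
      simp only [List.nil_append, List.cons_append] at ih ⊢
      rw [shf_cons_cons, ih]
      simp only [shf_cons_cons, shf_nil_left, mapDomain_add, mapDomain_smul,
        mapDomain_single, ← mapDomain_comp, Function.comp_def, smul_add, smul_smul,
        dsum_cons, dsum_append, dsum_nil, mul_add, mul_zero, zsgn_add, zsgn_zero]
      simp only [List.cons_append, mul_comm]
      module
  | cons a u ihu =>
    induction v with
    | nil =>
      have ih := ihu []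
      simp only [List.nil_append, List.cons_append] at ih ⊢
      rw [shf_cons_cons, ih]
      simp only [shf_cons_cons, shf_nil_right, mapDomain_add, mapDomain_smul,
        mapDomain_single, ← mapDomain_comp, Function.comp_def, smul_add, smul_smul,
        dsum_cons, dsum_append, dsum_nil, mul_add, mul_zero, zsgn_add, zsgn_zero]
      simp only [List.cons_append, mul_comm]
      module
    | cons b v ihv =>
      have ih := ihu (b :: v)
      simp only [List.cons_append] at ih ihv ⊢
      rw [shf_cons_cons, ih, ihv]
      simp only [shf_cons_cons, mapDomain_add, mapDomain_smul,
        ← mapDomain_comp, Function.comp_def, smul_add, smul_smul,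
        dsum_cons, dsum_append, dsum_nil, mul_add, mul_zero, zsgn_add, zsgn_zero]
      simp only [List.cons_append, mul_comm]
      module

end Shuffle

section Antisymmetrisation

/-- The term `μ ⊗ id` in the recursion of `mu`. -/
def muTensorId (K : Type) [Field K] (ds : ι → ℤ) (w : List ι) : FM K (List ι) :=
  match w.getLast? with
  | .none => 0
  | .some z => mapDomain (· ++ [z]) (mu K ds w.dropLast)

/-- The term `(μ ⊗ id) ∘ τ⁻¹` in the recursion of `mu`. -/
def muTensorIdRotate (K : Type) [Field K] (ds : ι → ℤ) : List ι → FM K (List ι)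
  | [] => 0
  | a :: l => zsgn K (ds a * dsum ds l) • mapDomain (· ++ [a]) (mu K ds l)

variable (ds : ι → ℤ)

lemma muTensorId_append_singleton (w : List ι) (z : ι) :
    muTensorId K ds (w ++ [z]) = mapDomain (· ++ [z]) (mu K ds w) := by
  simp [muTensorId]

lemma mu_eq_muTensorId_sub_muTensorIdRotate {w : List ι} (hw : 2 ≤ w.length) :
    mu K ds w = muTensorId K ds w - muTensorIdRotate K ds w := by
  match w, hw with
  | a :: b :: l, _ =>
    rw [mu, muTensorIdRotate, muTensorId, List.getLast?_eq_some_getLast (List.cons_ne_nil _ _),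
      List.getLast_cons (List.cons_ne_nil _ _)]

lemma linearCombination_muTensorId_shf (x y : ι) (u v : List ι) :
    linearCombination K (muTensorId K ds) (shf K ds (u ++ [x]) (v ++ [y])) =
      zsgn K (ds x * dsum ds (v ++ [y])) •
          mapDomain (· ++ [x]) (linearCombination K (mu K ds) (shf K ds u (v ++ [y])))
        + mapDomain (· ++ [y]) (linearCombination K (mu K ds) (shf K ds (u ++ [x]) v)) := by
  simp only [shf_append_singleton, map_add, map_smul, linearCombination_mapDomain,
    Function.comp_def, muTensorId_append_singleton, linearCombination_mapDomain_comp]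

lemma linearCombination_muTensorIdRotate_shf (a b : ι) (u v : List ι) :
    linearCombination K (muTensorIdRotate K ds) (shf K ds (a :: u) (b :: v)) =
      zsgn K (ds a * dsum ds (u ++ b :: v)) •
          mapDomain (· ++ [a]) (linearCombination K (mu K ds) (shf K ds u (b :: v)))
        + zsgn K (ds b * dsum ds v) •
          mapDomain (· ++ [b]) (linearCombination K (mu K ds) (shf K ds (a :: u) v)) := by
  have rotate_cons {c : ι} {u' v' : List ι} {w : List ι} (hw : w ∈ (shf K ds u' v').support) :
      (muTensorIdRotate K ds ∘ (c :: ·)) w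
        = zsgn K (ds c * dsum ds (u' ++ v')) • mapDomain (· ++ [c]) (mu K ds w) := by
    rw [Function.comp_apply, muTensorIdRotate, dsum_of_mem_support_shf ds hw]
  rw [shf_cons_cons, map_add, map_smul, linearCombination_mapDomain, linearCombination_mapDomain,
    linearCombination_congr_of_mem_support fun w hw => rotate_cons hw,
    linearCombination_congr_of_mem_support (x := shf K ds (a :: u) v) fun w hw => rotate_cons hw,
    linearCombination_const_smul, linearCombination_const_smul, linearCombination_mapDomain_comp,
    linearCombination_mapDomain_comp, smul_smul, dsum_append ds (a :: u), mul_add (ds b),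
    zsgn_mul_zsgn_add]

lemma linearCombination_mu_shf {a b x y : ι} {u₁ v₁ u₀ v₀ : List ι}
    (hu : a :: u₁ = u₀ ++ [x]) (hv : b :: v₁ = v₀ ++ [y]) :
    linearCombination K (mu K ds) (shf K ds (a :: u₁) (b :: v₁)) =
      (zsgn K (ds x * dsum ds (b :: v₁)) •
          mapDomain (· ++ [x]) (linearCombination K (mu K ds) (shf K ds u₀ (b :: v₁)))
        + mapDomain (· ++ [y]) (linearCombination K (mu K ds) (shf K ds (a :: u₁) v₀)))
      - (zsgn K (ds a * dsum ds (u₁ ++ b :: v₁)) •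
          mapDomain (· ++ [a]) (linearCombination K (mu K ds) (shf K ds u₁ (b :: v₁)))
        + zsgn K (ds b * dsum ds v₁) •
          mapDomain (· ++ [b]) (linearCombination K (mu K ds) (shf K ds (a :: u₁) v₁))) := by
  have two_le {w : List ι} (hw : w ∈ (shf K ds (a :: u₁) (b :: v₁)).support) : 2 ≤ w.length := by
    simp only [length_of_mem_support_shf ds hw, List.length_cons]
    omega
  rw [linearCombination_congr_of_mem_support
      fun w hw => mu_eq_muTensorId_sub_muTensorIdRotate ds (two_le hw),
    ← Pi.sub_def, linearCombination_sub_apply, linearCombination_muTensorIdRotate_shf, hu, hv,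
    linearCombination_muTensorId_shf, ← hu, ← hv]

theorem linearCombination_mu_shf_eq_zero : ∀ {u v : List ι}, u ≠ [] → v ≠ [] →
    linearCombination K (mu K ds) (shf K ds u v) = 0
  | a :: u₁, b :: v₁, _, _ => by
    obtain ⟨u₀, x, hu⟩ := (List.eq_nil_or_concat' (a :: u₁)).resolve_left (List.cons_ne_nil _ _)
    obtain ⟨v₀, y, hv⟩ := (List.eq_nil_or_concat' (b :: v₁)).resolve_left (List.cons_ne_nil _ _)
    have u_side : zsgn K (ds x * dsum ds (b :: v₁)) •
          mapDomain (· ++ [x]) (linearCombination K (mu K ds) (shf K ds u₀ (b :: v₁)))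
        = zsgn K (ds a * dsum ds (u₁ ++ b :: v₁)) •
          mapDomain (· ++ [a]) (linearCombination K (mu K ds) (shf K ds u₁ (b :: v₁))) := by
      rcases List.cons_eq_append_singleton_cases hu with ⟨rfl, rfl, rfl⟩ | ⟨h₁, h₀, hlen⟩
      · simp
      · rw [linearCombination_mu_shf_eq_zero h₀ (List.cons_ne_nil _ _),
          linearCombination_mu_shf_eq_zero h₁ (List.cons_ne_nil _ _)]
        simp
    have v_side :
        mapDomain (· ++ [y]) (linearCombination K (mu K ds) (shf K ds (a :: u₁) v₀))
        = zsgn K (ds b * dsum ds v₁) •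
          mapDomain (· ++ [b]) (linearCombination K (mu K ds) (shf K ds (a :: u₁) v₁)) := by
      rcases List.cons_eq_append_singleton_cases hv with ⟨rfl, rfl, rfl⟩ | ⟨h₁, h₀, hlen⟩
      · simp
      · rw [linearCombination_mu_shf_eq_zero (List.cons_ne_nil _ _) h₀,
          linearCombination_mu_shf_eq_zero (List.cons_ne_nil _ _) h₁]
        simp
    rw [linearCombination_mu_shf ds hu hv, u_side, v_side, sub_self]
termination_by u v => u.length + v.length
decreasing_by all_goals (simp only [List.length_cons]; omega)

end Antisymmetrisation

/-- For all `p, q ≥ 1`, the composition `μ_{p+q} ∘ sh_{p,q}`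
vanishes: applying the (linear extension of the) iterated signed
antisymmetrisation `μ` to any Koszul-signed shuffle product of two nonempty
words of lengths `p` and `q` gives `0`. -/
theorem stmt8 (K ι : Type) [Field K] (d : ι → ℤ) :
    -- `ds` is the shifted degree `deg(x) = |x| − 1` on `V[1]`
    ∀ ds : ι → ℤ, ds = (fun i => d i - 1) →
    ∀ (p q : ℕ), 1 ≤ p → 1 ≤ q →
    ∀ (u v : List ι), u.length = p → v.length = q →
      extL (mu K ds) (shf K ds u v) = 0 := by
  intro ds _ p q hp hq u v hu hv
  rw [extL_eq_linearCombination]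
  exact linearCombination_mu_shf_eq_zero ds (List.ne_nil_of_length_pos (by omega))
    (List.ne_nil_of_length_pos (by omega))

end PG
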